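/- Let q = (q_0, …, q_{n-1}) ∈ ℂ^n be a nonzero vector satisfying the lower system and suppose λ_{n-2}·q_0^k + q_1^k = 0. Then the set of points [x_0 : … : x_n] of the generalized Fermat curve C^k(λ) ⊂ ℙ^n(ℂ) such that (x_0, …, x_{n-1}) is a nonzero scalar multiple of q has exactly one element (namely the point with x_n = 0). (The covering π : C^k(λ) → C^k(λ') is totally branched over the branch locus.) -/
import Mathlib


noncomputable section

/-- A solution of the generalized Fermat system of type `(k,n)`:
`x₀^k + x₁^k + x₂^k = 0` and `λ_j·x₀^k + x₁^k + x_{j+2}^k = 0` for `j = 1, …, n-2`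
(here `lam` is 0-indexed, so `lam j` is `λ_{j+1}` and the last variable index is `j+3`). -/
def gfSol (k n : ℕ) (hn : 3 ≤ n) (lam : Fin (n - 2) → ℂ) (x : Fin (n + 1) → ℂ) : Prop :=
  x ⟨0, by omega⟩ ^ k + x ⟨1, by omega⟩ ^ k + x ⟨2, by omega⟩ ^ k = 0 ∧
    ∀ j : Fin (n - 2),
      lam j * x ⟨0, by omega⟩ ^ k + x ⟨1, by omega⟩ ^ k +
        x ⟨(j : ℕ) + 3, by have := j.2; omega⟩ ^ k = 0

/-- A solution of the lower system `P₁, …, P_{n-2}` (the equations not involving `x_n`). -/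
def gfSolLow (k n : ℕ) (hn : 3 ≤ n) (lam : Fin (n - 2) → ℂ) (y : Fin n → ℂ) : Prop :=
  y ⟨0, by omega⟩ ^ k + y ⟨1, by omega⟩ ^ k + y ⟨2, by omega⟩ ^ k = 0 ∧
    ∀ j : Fin (n - 2), ∀ h : (j : ℕ) + 3 < n,
      lam j * y ⟨0, by omega⟩ ^ k + y ⟨1, by omega⟩ ^ k + y ⟨(j : ℕ) + 3, h⟩ ^ k = 0

theorem generalized_fermat_branched_fiber_count (k n : ℕ) (hk : 2 ≤ k) (hn : 3 ≤ n)
    (lam : Fin (n - 2) → ℂ) (hl0 : ∀ j, lam j ≠ 0) (hl1 : ∀ j, lam j ≠ 1)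
    (hinj : Function.Injective lam)
    (q : Fin n → ℂ) (hq0 : q ≠ 0) (hq : gfSolLow k n hn lam q)
    (hbr : lam ⟨n - 3, by omega⟩ * q ⟨0, by omega⟩ ^ k + q ⟨1, by omega⟩ ^ k = 0) :
    {p : Projectivization ℂ (Fin (n + 1) → ℂ) |
        ∃ (x : Fin (n + 1) → ℂ) (hx : x ≠ 0), gfSol k n hn lam x ∧
          (∃ c : ℂ, c ≠ 0 ∧ (fun i : Fin n => x i.castSucc) = c • q) ∧
          p = Projectivization.mk ℂ x hx}.Finite ∧
      {p : Projectivization ℂ (Fin (n + 1) → ℂ) |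
        ∃ (x : Fin (n + 1) → ℂ) (hx : x ≠ 0), gfSol k n hn lam x ∧
          (∃ c : ℂ, c ≠ 0 ∧ (fun i : Fin n => x i.castSucc) = c • q) ∧
          p = Projectivization.mk ℂ x hx}.ncard = 1 := by
  have hkne : k ≠ 0 := by omega
  set x₀ : Fin (n + 1) → ℂ := Fin.snoc q 0 with hx₀def
  have hlt : ∀ (i : ℕ) (h : i < n) (h' : i < n + 1), x₀ ⟨i, h'⟩ = q ⟨i, h⟩ := by
    intro i h h'
    have : (⟨i, h'⟩ : Fin (n + 1)) = Fin.castSucc ⟨i, h⟩ := rfl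
    rw [this, hx₀def, Fin.snoc_castSucc]
  have hlast : ∀ h' : n < n + 1, x₀ ⟨n, h'⟩ = 0 := by
    intro h'
    have : (⟨n, h'⟩ : Fin (n + 1)) = Fin.last n := rfl
    rw [this, hx₀def, Fin.snoc_last]
  have hx₀ne : x₀ ≠ 0 := by
    intro h
    apply hq0
    funext i
    have := congrFun h (Fin.castSucc i)
    simpa [hx₀def] using this
  have hsol₀ : gfSol k n hn lam x₀ := by
    constructor
    · rw [hlt 0 (by omega), hlt 1 (by omega), hlt 2 (by omega)]
      exact hq.1
    · intro j
      by_cases h : (j : ℕ) + 3 < n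
      · rw [hlt 0 (by omega), hlt 1 (by omega), hlt ((j : ℕ) + 3) h]
        exact hq.2 j h
      · have hjn : (j : ℕ) + 3 = n := by have := j.2; omega
        have hjj : j = ⟨n - 3, by omega⟩ := by ext; simp; omega
        have hz : ∀ h' : (j : ℕ) + 3 < n + 1, x₀ ⟨(j : ℕ) + 3, h'⟩ = 0 := by
          intro h'
          have : (⟨(j : ℕ) + 3, h'⟩ : Fin (n + 1)) = ⟨n, by omega⟩ := by ext; simpa using hjn
          rw [this]; exact hlast _
        have hlj : lam j = lam ⟨n - 3, by omega⟩ := congrArg lam hjj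
        rw [hlt 0 (by omega), hlt 1 (by omega), hz, hlj]
        rw [zero_pow hkne, add_zero]
        exact hbr
  have hset : {p : Projectivization ℂ (Fin (n + 1) → ℂ) |
        ∃ (x : Fin (n + 1) → ℂ) (hx : x ≠ 0), gfSol k n hn lam x ∧
          (∃ c : ℂ, c ≠ 0 ∧ (fun i : Fin n => x i.castSucc) = c • q) ∧
          p = Projectivization.mk ℂ x hx} = {Projectivization.mk ℂ x₀ hx₀ne} := by
    ext p
    simp only [Set.mem_setOf_eq, Set.mem_singleton_iff]
    constructor
    · rintro ⟨x, hx, hsol, ⟨c, hc, hcq⟩, rfl⟩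
      have hxi : ∀ (i : ℕ) (h : i < n) (h' : i < n + 1), x ⟨i, h'⟩ = c * q ⟨i, h⟩ := by
        intro i h h'
        have := congrFun hcq ⟨i, h⟩
        simpa using this
      have hxn : ∀ h' : n < n + 1, x ⟨n, h'⟩ = 0 := by
        intro h'
        have e := hsol.2 ⟨n - 3, by omega⟩
        simp only [show n - 3 + 3 = n from by omega] at e
        rw [hxi 0 (by omega), hxi 1 (by omega)] at e
        have hxnk : x ⟨n, h'⟩ ^ k = 0 := by
          have : x ⟨n, h'⟩ ^ k = x ⟨n, by omega⟩ ^ k := rfl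
          rw [this]
          linear_combination e - c ^ k * hbr
        exact pow_eq_zero_iff hkne |>.mp hxnk
      have hxeq : x = c • x₀ := by
        funext i
        refine Fin.lastCases ?_ ?_ i
        · have : Fin.last n = (⟨n, by omega⟩ : Fin (n + 1)) := rfl
          rw [this, hxn]
          simp [hlast (by omega)]
        · intro i
          have h1 : x i.castSucc = c * q i := by
            have := congrFun hcq i; simpa using this
          have h2 : x₀ i.castSucc = q i := by rw [hx₀def, Fin.snoc_castSucc]
          simp [h1, h2]
      rw [Projectivization.mk_eq_mk_iff]
      exact ⟨Units.mk0 c hc, by simp [Units.smul_def, hxeq]⟩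
    · intro h
      refine ⟨x₀, hx₀ne, hsol₀, ⟨1, one_ne_zero, ?_⟩, h⟩
      funext i
      simp [hx₀def]
  rw [hset]
  exact ⟨Set.finite_singleton _, Set.ncard_singleton _⟩
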